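/- Let G' be an extended 1-dimensional hierarchical graph with n odd, with parts A = S_0 ∪ S_2 ∪ ⋯ ∪ S_{n−1} and B = S_1 ∪ S_3 ∪ ⋯ ∪ S_n. Define the flattened star states ψ̄_i = √(W_i) |L_i⟩ + √(W_{i+1}) |L_{i+1}⟩ for 0 ≤ i ≤ n, and let R_Ā (resp. R_B̄) be the unitary on ℂ^{E ∪ E'} acting as −1 on span{ψ̄_i : i even, 0 ≤ i ≤ n} (resp. span{ψ̄_i : i odd, 0 ≤ i ≤ n}) and as the identity on its orthogonal complement. Then for every x in the span of {|L_0⟩, |L_1⟩, …, |L_{n+1}⟩}, one has R_A(G') x = R_Ā x and R_B(G') x = R_B̄ x; that is, the quantum walk reflections of G' restricted to the span of the layer-uniform vectors coincide with the reflections of the flattened line graph. -/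

import Mathlib

/-!
**Statement 14.**
Let `G'` be an extended 1-dimensional hierarchical graph with `n` odd, with parts
`A = S_0 ∪ S_2 ∪ ⋯ ∪ S_{n−1}` and `B = S_1 ∪ S_3 ∪ ⋯ ∪ S_n`.  Define the flattened star
states `ψ̄_i = √(W_i)|L_i⟩ + √(W_{i+1})|L_{i+1}⟩` for `0 ≤ i ≤ n`, and let `R_Ā`
(resp. `R_B̄`) be the unitary acting as `−1` on `span{ψ̄_i : i ≤ n even}`
(resp. `span{ψ̄_i : i ≤ n odd}`) and as the identity on its orthogonal complement.  Then for
every `x` in the span of `{|L_0⟩, …, |L_{n+1}⟩}` one has `R_A(G') x = R_Ā x` and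
`R_B(G') x = R_B̄ x`: the quantum walk reflections of `G'` restricted to the span of the
layer-uniform vectors coincide with the reflections of the flattened line graph.

The hierarchical graph is modelled abstractly: vertices `V` carry a layer `vlayer u ≤ n`,
edges `E` carry a layer `elayer e ∈ {1, …, n}` and endpoint maps `lo` (in `S_{elayer e − 1}`)
and `hi` (in `S_{elayer e}`); `s` and `t` are the unique vertices of layers `0` and `n`;
every vertex of `S_i` (`i < n`) has exactly `d⁺_i` up-edges and every vertex of `S_i`
(`i ≥ 1`) has exactly `d⁻_i` down-edges.  The dangling edge `ss'` (layer `L_0`) has weight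
`W_0 > 0` and `t't` (layer `L_{n+1}`) has weight `W_{n+1} > 0`; all original edges have
weight 1 and `W_i = |L_i|` for `1 ≤ i ≤ n`.  The walk space is
`EuclideanSpace ℂ (E ⊕ Bool)` (`Sum.inr false = ss'`, `Sum.inr true = t't`);
`|L_i⟩ = (1/√(W_i)) ∑_{e ∈ L_i} |e⟩` and `ψ_u = ∑_{e ∼ u} √(w_e) |e⟩`.  All four
reflections `R_A`, `R_B`, `R_Ā`, `R_B̄` are specified by their defining properties.
-/

noncomputable section

namespace Stmt14

variable {V E : Type*} [Fintype V] [Fintype E] [DecidableEq V] [DecidableEq E]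

def ket (x : E ⊕ Bool) : EuclideanSpace ℂ (E ⊕ Bool) := EuclideanSpace.single x 1

/-- The weight `W_i` of the `i`-th edge layer: `W_0` and `W_{n+1}` are the weights of the
dangling edges, and `W_i = |L_i|` for `1 ≤ i ≤ n`. -/
def Wt (n : ℕ) (elayer : E → ℕ) (W0 Wn1 : ℝ) (i : ℕ) : ℝ :=
  if i = 0 then W0 else if i = n + 1 then Wn1
  else ((Finset.univ.filter fun e => elayer e = i).card : ℝ)

/-- The normalized layer-uniform state `|L_i⟩`. -/
def Lket (n : ℕ) (elayer : E → ℕ) (W0 Wn1 : ℝ) (i : ℕ) : EuclideanSpace ℂ (E ⊕ Bool) :=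
  if i = 0 then ket (Sum.inr false) else if i = n + 1 then ket (Sum.inr true)
  else ((Real.sqrt (Wt n elayer W0 Wn1 i))⁻¹ : ℂ) •
    ∑ e ∈ Finset.univ.filter (fun e => elayer e = i), ket (Sum.inl e)

/-- The star state `ψ_u` of a vertex of the extended hierarchical graph. -/
def psi (lo hi : E → V) (s t : V) (W0 Wn1 : ℝ) (u : V) : EuclideanSpace ℂ (E ⊕ Bool) :=
  (∑ e ∈ Finset.univ.filter (fun e => hi e = u), ket (Sum.inl e)) +
  (∑ e ∈ Finset.univ.filter (fun e => lo e = u), ket (Sum.inl e)) +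
  (if u = s then (Real.sqrt W0 : ℂ) • ket (Sum.inr false) else 0) +
  (if u = t then (Real.sqrt Wn1 : ℂ) • ket (Sum.inr true) else 0)

/-- The flattened star state `ψ̄_i = √(W_i)|L_i⟩ + √(W_{i+1})|L_{i+1}⟩`. -/
def psibar (n : ℕ) (elayer : E → ℕ) (W0 Wn1 : ℝ) (i : ℕ) : EuclideanSpace ℂ (E ⊕ Bool) :=
  (Real.sqrt (Wt n elayer W0 Wn1 i) : ℂ) • Lket n elayer W0 Wn1 i
    + (Real.sqrt (Wt n elayer W0 Wn1 (i + 1)) : ℂ) • Lket n elayer W0 Wn1 (i + 1)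

end Stmt14

/-!
Every vector `x` in the span of the `|L_i⟩` is constant on each edge layer, say `x = g_j` on
`L_j`, so for `u ∈ S_i` with `0 < i < n` one gets `⟨ψ_u, x⟩ = d⁻_i g_i + d⁺_i g_{i+1}`, the same
number for all `u ∈ S_i`. As `ψ̄_i = ∑_{u ∈ S_i} ψ_u` (and `ψ̄_0 = ψ_s`, `ψ̄_n = ψ_t`), such an `x`
is orthogonal to the star states of a set of layers as soon as it is orthogonal to the
corresponding flattened star states. Hence, with `K ⊆ X` the span of those `ψ̄_i` and `X` the span
of the `|L_i⟩`, both reflections are `−1` on `K` and the identity on `X ∩ Kᗮ`, so they agree on `X`.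
-/

open Finset Submodule
open scoped InnerProductSpace

lemma map_eq_neg_of_mem_span {R M : Type*} [Ring R] [AddCommGroup M] [Module R M]
    {f : M →ₗ[R] M} {S : Set M} (hf : ∀ v ∈ S, f v = -v) {y : M} (hy : y ∈ span R S) :
    f y = -y := by
  induction hy using Submodule.span_induction with
  | mem v hv => exact hf v hv
  | zero => simp
  | add a b _ _ ha hb => rw [map_add, ha, hb, neg_add]
  | smul c a _ ha => rw [map_smul, ha, smul_neg]

lemma apply_eq_neg_reflection {𝕜 H : Type*} [RCLike 𝕜] [NormedAddCommGroup H]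
    [InnerProductSpace 𝕜 H] {X K : Submodule 𝕜 H} [K.HasOrthogonalProjection] (hKX : K ≤ X)
    {f : H →ₗ[𝕜] H} (hneg : ∀ y ∈ K, f y = -y) (hid : ∀ z ∈ X, z ∈ Kᗮ → f z = z)
    {x : H} (hx : x ∈ X) : f x = -K.reflection x := by
  have hp := K.starProjection_apply_mem x
  have hz : f (x - K.starProjection x) = x - K.starProjection x :=
    hid _ (X.sub_mem hx (hKX hp)) (K.sub_starProjection_mem_orthogonal x)
  rw [map_sub, hneg _ hp, sub_eq_iff_eq_add] at hz
  rw [hz, reflection_apply, two_smul]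
  abel

namespace Stmt14

variable {V E : Type*}

lemma elayer_eq_of_lo_eq {n : ℕ} {vlayer : V → ℕ} {elayer : E → ℕ} {lo : E → V}
    (hel : ∀ e, 1 ≤ elayer e ∧ elayer e ≤ n) (hlo : ∀ e, vlayer (lo e) = elayer e - 1)
    {e : E} {u : V} (h : lo e = u) : elayer e = vlayer u + 1 := by
  have := (hel e).1
  rw [← h, hlo]
  omega

def layerConstant (elayer : E → ℕ) : Submodule ℂ (EuclideanSpace ℂ (E ⊕ Bool)) where
  carrier := {x | ∃ g : ℕ → ℂ, ∀ e, x (Sum.inl e) = g (elayer e)}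
  add_mem' := by
    rintro x y ⟨g, hg⟩ ⟨h, hh⟩
    exact ⟨g + h, fun e => by simp [hg, hh]⟩
  zero_mem' := ⟨0, fun e => by simp⟩
  smul_mem' := by
    rintro c x ⟨g, hg⟩
    exact ⟨c • g, fun e => by simp [hg]⟩

section Layers
variable [Fintype E] [DecidableEq E] {n : ℕ} {elayer : E → ℕ} {W0 Wn1 : ℝ}

lemma inner_ket_left (a : E ⊕ Bool) (x : EuclideanSpace ℂ (E ⊕ Bool)) :
    ⟪ket a, x⟫_ℂ = x a := by
  simp [ket, EuclideanSpace.inner_single_left]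

lemma Lket_mem_layerConstant (j : ℕ) : Lket n elayer W0 Wn1 j ∈ layerConstant elayer := by
  unfold Lket
  split_ifs
  · exact ⟨0, fun e => by simp [ket]⟩
  · exact ⟨0, fun e => by simp [ket]⟩
  · refine ⟨fun k => if k = j then ((√(Wt n elayer W0 Wn1 j))⁻¹ : ℂ) else 0, fun e => ?_⟩
    simp [ket, Pi.single_apply, Finset.sum_ite_eq]

lemma sqrt_smul_Lket {i : ℕ} (hi0 : i ≠ 0) (hin : i ≤ n) :
    (√(Wt n elayer W0 Wn1 i) : ℂ) • Lket n elayer W0 Wn1 i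
      = ∑ e with elayer e = i, ket (Sum.inl e) := by
  rw [Lket, if_neg hi0, if_neg (by omega), smul_smul]
  rcases (univ.filter fun e => elayer e = i).eq_empty_or_nonempty with h | h
  · simp [h]
  · have hW : 0 < Wt n elayer W0 Wn1 i := by
      simpa [Wt, hi0, show i ≠ n + 1 by omega, Finset.card_pos] using h
    rw [mul_inv_cancel₀ (by exact_mod_cast (Real.sqrt_pos.2 hW).ne'), one_smul]

end Layers

section Stars
variable [Fintype E] [DecidableEq E] [DecidableEq V] {n : ℕ} {vlayer : V → ℕ} {elayer : E → ℕ}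
  {lo hi : E → V} {s t : V} {W0 Wn1 : ℝ}

lemma psi_of_ne {u : V} (hus : u ≠ s) (hut : u ≠ t) :
    psi lo hi s t W0 Wn1 u
      = ∑ e with hi e = u, ket (Sum.inl e) + ∑ e with lo e = u, ket (Sum.inl e) := by
  simp [psi, hus, hut]

lemma psi_source_eq_psibar_zero (hn : 1 ≤ n) (hel : ∀ e, 1 ≤ elayer e ∧ elayer e ≤ n)
    (hlo : ∀ e, vlayer (lo e) = elayer e - 1) (hhi : ∀ e, vlayer (hi e) = elayer e)
    (hs : vlayer s = 0) (hsu : ∀ u, vlayer u = 0 → u = s) (ht : vlayer t = n) :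
    psi lo hi s t W0 Wn1 s = psibar n elayer W0 Wn1 0 := by
  have hst : s ≠ t := fun h => by rw [h, ht] at hs; omega
  have hin : (univ.filter fun e => hi e = s) = ∅ :=
    filter_eq_empty_iff.2 fun e _ he => by have := (hel e).1; rw [← hhi, he, hs] at this; omega
  have hout : (univ.filter fun e => lo e = s) = univ.filter fun e => elayer e = 1 :=
    filter_congr fun e _ => ⟨fun he => by rw [elayer_eq_of_lo_eq hel hlo he, hs],
      fun he => hsu _ (by rw [hlo, he])⟩
  rw [psibar, zero_add, sqrt_smul_Lket one_ne_zero hn, psi, hin, hout, if_pos rfl, if_neg hst]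
  simp [Lket, Wt, add_comm]

lemma psi_sink_eq_psibar (hn : 1 ≤ n) (hel : ∀ e, 1 ≤ elayer e ∧ elayer e ≤ n)
    (hlo : ∀ e, vlayer (lo e) = elayer e - 1) (hhi : ∀ e, vlayer (hi e) = elayer e)
    (hs : vlayer s = 0) (ht : vlayer t = n) (htu : ∀ u, vlayer u = n → u = t) :
    psi lo hi s t W0 Wn1 t = psibar n elayer W0 Wn1 n := by
  have hts : t ≠ s := fun h => by rw [h, hs] at ht; omega
  have hout : (univ.filter fun e => lo e = t) = ∅ :=
    filter_eq_empty_iff.2 fun e _ he => by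
      have := elayer_eq_of_lo_eq hel hlo he; have := (hel e).2; omega
  have hin : (univ.filter fun e => hi e = t) = univ.filter fun e => elayer e = n :=
    filter_congr fun e _ => ⟨fun he => by rw [← hhi, he, ht],
      fun he => htu _ (by rw [hhi, he])⟩
  rw [psibar, sqrt_smul_Lket (by omega) le_rfl, psi, hin, hout, if_neg hts, if_pos rfl]
  simp [Lket, Wt]

lemma inner_psi_of_ne (hel : ∀ e, 1 ≤ elayer e ∧ elayer e ≤ n)
    (hlo : ∀ e, vlayer (lo e) = elayer e - 1) (hhi : ∀ e, vlayer (hi e) = elayer e)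
    {u : V} (hus : u ≠ s) (hut : u ≠ t) {x : EuclideanSpace ℂ (E ⊕ Bool)} {g : ℕ → ℂ}
    (hx : ∀ e, x (Sum.inl e) = g (elayer e)) :
    ⟪psi lo hi s t W0 Wn1 u, x⟫_ℂ
      = #{e | hi e = u} * g (vlayer u) + #{e | lo e = u} * g (vlayer u + 1) := by
  have hin : ∀ e ∈ univ.filter fun e => hi e = u, g (elayer e) = g (vlayer u) :=
    fun e he => by rw [← hhi, (mem_filter.1 he).2]
  have hout : ∀ e ∈ univ.filter fun e => lo e = u, g (elayer e) = g (vlayer u + 1) :=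
    fun e he => by rw [elayer_eq_of_lo_eq hel hlo (mem_filter.1 he).2]
  simp only [psi_of_ne hus hut, inner_add_left, sum_inner, inner_ket_left, hx]
  rw [sum_congr rfl hin, sum_congr rfl hout, sum_const, sum_const, nsmul_eq_mul, nsmul_eq_mul]

variable [Fintype V]

lemma psibar_eq_sum_psi (hel : ∀ e, 1 ≤ elayer e ∧ elayer e ≤ n)
    (hlo : ∀ e, vlayer (lo e) = elayer e - 1) (hhi : ∀ e, vlayer (hi e) = elayer e)
    (hs : vlayer s = 0) (ht : vlayer t = n) {i : ℕ} (hi0 : i ≠ 0) (hin : i < n) :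
    psibar n elayer W0 Wn1 i = ∑ u with vlayer u = i, psi lo hi s t W0 Wn1 u := by
  have hpsi : ∀ u ∈ univ.filter fun u => vlayer u = i, psi lo hi s t W0 Wn1 u
      = ∑ e with hi e = u, ket (Sum.inl e) + ∑ e with lo e = u, ket (Sum.inl e) := by
    intro u hu
    rw [mem_filter] at hu
    exact psi_of_ne (by rintro rfl; omega) (by rintro rfl; omega)
  rw [sum_congr rfl hpsi, sum_add_distrib, sum_fiberwise_eq_sum_filter,
    sum_fiberwise_eq_sum_filter, psibar, sqrt_smul_Lket hi0 hin.le,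
    sqrt_smul_Lket (by omega) hin]
  congr 1 <;> refine sum_congr (filter_congr fun e _ => ?_) fun _ _ => rfl
  · simp [hhi]
  · have := (hel e).1
    simp [hlo]
    omega

lemma psibar_mem_span_psi (hn : 1 ≤ n) (hel : ∀ e, 1 ≤ elayer e ∧ elayer e ≤ n)
    (hlo : ∀ e, vlayer (lo e) = elayer e - 1) (hhi : ∀ e, vlayer (hi e) = elayer e)
    (hs : vlayer s = 0) (hsu : ∀ u, vlayer u = 0 → u = s)
    (ht : vlayer t = n) (htu : ∀ u, vlayer u = n → u = t) {i : ℕ} (hin : i ≤ n) :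
    psibar n elayer W0 Wn1 i ∈ span ℂ (psi lo hi s t W0 Wn1 '' {u | vlayer u = i}) := by
  rcases Nat.eq_zero_or_pos i with rfl | hi0
  · rw [← psi_source_eq_psibar_zero hn hel hlo hhi hs hsu ht]
    exact subset_span ⟨s, hs, rfl⟩
  rcases hin.lt_or_eq with hin | rfl
  · rw [psibar_eq_sum_psi hel hlo hhi hs ht hi0.ne' hin]
    exact sum_mem fun u hu => subset_span ⟨u, (mem_filter.1 hu).2, rfl⟩
  · rw [← psi_sink_eq_psibar hn hel hlo hhi hs ht htu]
    exact subset_span ⟨t, ht, rfl⟩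

lemma inner_psibar_eq_card_mul_inner_psi (hel : ∀ e, 1 ≤ elayer e ∧ elayer e ≤ n)
    (hlo : ∀ e, vlayer (lo e) = elayer e - 1) (hhi : ∀ e, vlayer (hi e) = elayer e)
    (hs : vlayer s = 0) (ht : vlayer t = n) (dplus dminus : ℕ → ℕ)
    (hdp : ∀ u, vlayer u < n → #{e | lo e = u} = dplus (vlayer u))
    (hdm : ∀ u, 1 ≤ vlayer u → #{e | hi e = u} = dminus (vlayer u))
    {u : V} (hu0 : vlayer u ≠ 0) (hun : vlayer u < n)
    {x : EuclideanSpace ℂ (E ⊕ Bool)} (hx : x ∈ layerConstant elayer) :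
    ⟪psibar n elayer W0 Wn1 (vlayer u), x⟫_ℂ
      = #{v | vlayer v = vlayer u} * ⟪psi lo hi s t W0 Wn1 u, x⟫_ℂ := by
  obtain ⟨g, hg⟩ := hx
  have hstar : ∀ v ∈ univ.filter fun v => vlayer v = vlayer u, ⟪psi lo hi s t W0 Wn1 v, x⟫_ℂ
      = dminus (vlayer u) * g (vlayer u) + dplus (vlayer u) * g (vlayer u + 1) := by
    intro v hv
    rw [mem_filter] at hv
    rw [inner_psi_of_ne hel hlo hhi (by rintro rfl; omega) (by rintro rfl; omega) hg,
      hdm v (by omega), hdp v (by omega), hv.2]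
  rw [psibar_eq_sum_psi hel hlo hhi hs ht hu0 hun, sum_inner, sum_congr rfl hstar,
    hstar u (by simp), sum_const, nsmul_eq_mul]

lemma inner_psi_eq_zero_of_inner_psibar_eq_zero (hn : 1 ≤ n) (hvl : ∀ u, vlayer u ≤ n)
    (hel : ∀ e, 1 ≤ elayer e ∧ elayer e ≤ n)
    (hlo : ∀ e, vlayer (lo e) = elayer e - 1) (hhi : ∀ e, vlayer (hi e) = elayer e)
    (hs : vlayer s = 0) (hsu : ∀ u, vlayer u = 0 → u = s)
    (ht : vlayer t = n) (htu : ∀ u, vlayer u = n → u = t) (dplus dminus : ℕ → ℕ)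
    (hdp : ∀ u, vlayer u < n → #{e | lo e = u} = dplus (vlayer u))
    (hdm : ∀ u, 1 ≤ vlayer u → #{e | hi e = u} = dminus (vlayer u))
    {x : EuclideanSpace ℂ (E ⊕ Bool)} (hx : x ∈ layerConstant elayer) {u : V}
    (h : ⟪psibar n elayer W0 Wn1 (vlayer u), x⟫_ℂ = 0) : ⟪psi lo hi s t W0 Wn1 u, x⟫_ℂ = 0 := by
  rcases Nat.eq_zero_or_pos (vlayer u) with hu0 | hu0
  · rw [hsu u hu0, psi_source_eq_psibar_zero hn hel hlo hhi hs hsu ht]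
    rwa [hu0] at h
  rcases (hvl u).lt_or_eq with hun | hun
  · rw [inner_psibar_eq_card_mul_inner_psi hel hlo hhi hs ht dplus dminus hdp hdm hu0.ne' hun hx,
      mul_eq_zero] at h
    exact h.resolve_left <| Nat.cast_ne_zero.2 <|
      card_ne_zero_of_mem (mem_filter.2 ⟨mem_univ u, rfl⟩)
  · rw [htu u hun, psi_sink_eq_psibar hn hel hlo hhi hs ht htu]
    rwa [hun] at h

lemma apply_eq_of_mem_span_Lket (P : ℕ → Prop) (hn : 1 ≤ n) (hvl : ∀ u, vlayer u ≤ n)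
    (hel : ∀ e, 1 ≤ elayer e ∧ elayer e ≤ n)
    (hlo : ∀ e, vlayer (lo e) = elayer e - 1) (hhi : ∀ e, vlayer (hi e) = elayer e)
    (hs : vlayer s = 0) (hsu : ∀ u, vlayer u = 0 → u = s)
    (ht : vlayer t = n) (htu : ∀ u, vlayer u = n → u = t) (dplus dminus : ℕ → ℕ)
    (hdp : ∀ u, vlayer u < n → #{e | lo e = u} = dplus (vlayer u))
    (hdm : ∀ u, 1 ≤ vlayer u → #{e | hi e = u} = dminus (vlayer u))
    {R Rbar : EuclideanSpace ℂ (E ⊕ Bool) →ₗ[ℂ] EuclideanSpace ℂ (E ⊕ Bool)}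
    (hRneg : ∀ u, P (vlayer u) → R (psi lo hi s t W0 Wn1 u) = -psi lo hi s t W0 Wn1 u)
    (hRid : ∀ x, (∀ u, P (vlayer u) → ⟪psi lo hi s t W0 Wn1 u, x⟫_ℂ = 0) → R x = x)
    (hRbarneg : ∀ i, i ≤ n → P i →
        Rbar (psibar n elayer W0 Wn1 i) = -psibar n elayer W0 Wn1 i)
    (hRbarid : ∀ x, (∀ i, i ≤ n → P i → ⟪psibar n elayer W0 Wn1 i, x⟫_ℂ = 0) → Rbar x = x)
    {x : EuclideanSpace ℂ (E ⊕ Bool)}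
    (hx : x ∈ span ℂ (Lket n elayer W0 Wn1 '' {i | i ≤ n + 1})) : R x = Rbar x := by
  set K := span ℂ (psibar n elayer W0 Wn1 '' {i | i ≤ n ∧ P i})
  have hKX : K ≤ span ℂ (Lket n elayer W0 Wn1 '' {i | i ≤ n + 1}) := span_le.2 <| by
    rintro _ ⟨i, ⟨hin, -⟩, rfl⟩
    exact add_mem (smul_mem _ _ (subset_span ⟨i, by simp; omega, rfl⟩))
      (smul_mem _ _ (subset_span ⟨i + 1, by simp; omega, rfl⟩))
  have hX : span ℂ (Lket n elayer W0 Wn1 '' {i | i ≤ n + 1}) ≤ layerConstant elayer :=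
    span_le.2 <| by rintro _ ⟨j, -, rfl⟩; exact Lket_mem_layerConstant j
  have hperp : ∀ z ∈ Kᗮ, ∀ i, i ≤ n → P i → ⟪psibar n elayer W0 Wn1 i, z⟫_ℂ = 0 :=
    fun z hz i hin hPi =>
      inner_right_of_mem_orthogonal (K := K) (subset_span ⟨i, ⟨hin, hPi⟩, rfl⟩) hz
  have hKpsi : K ≤ span ℂ (psi lo hi s t W0 Wn1 '' {u | P (vlayer u)}) := span_le.2 <| by
    rintro _ ⟨i, ⟨hin, hPi⟩, rfl⟩
    refine span_mono (Set.image_mono fun u (hu : vlayer u = i) => ?_)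
      (psibar_mem_span_psi hn hel hlo hhi hs hsu ht htu hin)
    show P (vlayer u)
    rwa [hu]
  have hR : R x = -K.reflection x := by
    refine apply_eq_neg_reflection hKX (fun y hy => map_eq_neg_of_mem_span ?_ (hKpsi hy))
      (fun z hzX hz => hRid z fun u hu => ?_) hx
    · rintro _ ⟨u, hu, rfl⟩
      exact hRneg u hu
    · exact inner_psi_eq_zero_of_inner_psibar_eq_zero hn hvl hel hlo hhi hs hsu ht htu
        dplus dminus hdp hdm (hX hzX) (hperp z hz _ (hvl u) hu)
  have hRbar : Rbar x = -K.reflection x := by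
    refine apply_eq_neg_reflection hKX (fun y hy => map_eq_neg_of_mem_span ?_ hy)
      (fun z _ hz => hRbarid z (hperp z hz)) hx
    rintro _ ⟨i, ⟨hin, hPi⟩, rfl⟩
    exact hRbarneg i hin hPi
  rw [hR, hRbar]

end Stars

variable [Fintype V] [Fintype E] [DecidableEq V] [DecidableEq E]

theorem hierarchical_flattening
    (n : ℕ) (vlayer : V → ℕ) (elayer : E → ℕ) (lo hi : E → V) (s t : V)
    (W0 Wn1 : ℝ)
    (hvl : ∀ u, vlayer u ≤ n)
    (hel : ∀ e, 1 ≤ elayer e ∧ elayer e ≤ n)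
    (hlo : ∀ e, vlayer (lo e) = elayer e - 1)
    (hhi : ∀ e, vlayer (hi e) = elayer e)
    (hs : vlayer s = 0) (hsu : ∀ u, vlayer u = 0 → u = s)
    (ht : vlayer t = n) (htu : ∀ u, vlayer u = n → u = t)
    (dplus dminus : ℕ → ℕ)
    (hdp : ∀ u, vlayer u < n →
        (Finset.univ.filter fun e => lo e = u).card = dplus (vlayer u))
    (hdm : ∀ u, 1 ≤ vlayer u →
        (Finset.univ.filter fun e => hi e = u).card = dminus (vlayer u))
    (hn : Odd n)
    (RA RB RAbar RBbar : EuclideanSpace ℂ (E ⊕ Bool) →ₗ[ℂ] EuclideanSpace ℂ (E ⊕ Bool))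
    (hRAneg : ∀ u, Even (vlayer u) → RA (psi lo hi s t W0 Wn1 u) = -psi lo hi s t W0 Wn1 u)
    (hRAid : ∀ x, (∀ u, Even (vlayer u) → (inner ℂ (psi lo hi s t W0 Wn1 u) x : ℂ) = 0) →
        RA x = x)
    (hRBneg : ∀ u, Odd (vlayer u) → RB (psi lo hi s t W0 Wn1 u) = -psi lo hi s t W0 Wn1 u)
    (hRBid : ∀ x, (∀ u, Odd (vlayer u) → (inner ℂ (psi lo hi s t W0 Wn1 u) x : ℂ) = 0) →
        RB x = x)
    (hRAbarneg : ∀ i, i ≤ n → Even i →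
        RAbar (psibar n elayer W0 Wn1 i) = -psibar n elayer W0 Wn1 i)
    (hRAbarid : ∀ x, (∀ i, i ≤ n → Even i → (inner ℂ (psibar n elayer W0 Wn1 i) x : ℂ) = 0) →
        RAbar x = x)
    (hRBbarneg : ∀ i, i ≤ n → Odd i →
        RBbar (psibar n elayer W0 Wn1 i) = -psibar n elayer W0 Wn1 i)
    (hRBbarid : ∀ x, (∀ i, i ≤ n → Odd i → (inner ℂ (psibar n elayer W0 Wn1 i) x : ℂ) = 0) →
        RBbar x = x) :
    ∀ x ∈ Submodule.span ℂ (Lket n elayer W0 Wn1 '' {i | i ≤ n + 1}),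
      RA x = RAbar x ∧ RB x = RBbar x := by
  intro x hx
  exact ⟨apply_eq_of_mem_span_Lket Even hn.pos hvl hel hlo hhi hs hsu ht htu dplus dminus hdp hdm
      hRAneg hRAid hRAbarneg hRAbarid hx,
    apply_eq_of_mem_span_Lket Odd hn.pos hvl hel hlo hhi hs hsu ht htu dplus dminus hdp hdm
      hRBneg hRBid hRBbarneg hRBbarid hx⟩

end Stmt14
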